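/- arXiv:1412.7281 — 2 statements merged into one kernel-verified Lean document; each statement's English description precedes it below -/
import Mathlib

section
/- Let L be the Laplacian of a strongly connected weighted directed graph with row sums dᵢ of A, and let 0 < α < 1/maxᵢ dᵢ. Then Q = I - αL - 1ωᵀ has spectral radius ρ(Q) < 1, where ω is the normalized left zero-eigenvector of L. -/
open Matrix

/-!
Since `ωᵀ L = 0` and `ωᵀ 1 = 1`, `ω` is a left null vector of `Q`, so an eigenvector `v` of `Q`
for an eigenvalue `μ ≠ 0` satisfies `ωᵀ v = 0` and is an eigenvector of `P = I - α L` for `μ`.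
The matrix `P` is row-stochastic with positive diagonal `1 - α dᵢ`, so by Geršgorin `μ` lies in a
disc `|z - (1 - α dₖ)| ≤ α dₖ`, which meets the unit circle only at `1`. Finally `μ = 1` is
impossible: then `L v = 0`, so by the maximum principle on the strongly connected graph `v` is
constant, and `ωᵀ v = 0` forces `v = 0`.
-/

section MaximumPrinciple

variable {ι E : Type*} [Fintype ι] [NormedAddCommGroup E] [InnerProductSpace ℝ E]

theorem eq_of_sum_smul_sub_eq_zero_of_norm_le {w : ι → ℝ} (hw : ∀ j, 0 ≤ w j) {x : E}
    {y : ι → E} (hy : ∀ j, ‖y j‖ ≤ ‖x‖) (hsum : ∑ j, w j • (x - y j) = 0) {a : ι}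
    (ha : 0 < w a) : y a = x := by
  have hterm : ∀ j, 0 ≤ w j * inner ℝ x (x - y j) := fun j => by
    refine mul_nonneg (hw j) ?_
    rw [inner_sub_right, real_inner_self_eq_norm_sq]
    nlinarith [real_inner_le_norm x (y j), hy j, norm_nonneg x]
  have hsum' : ∑ j, w j * inner ℝ x (x - y j) = 0 := by
    simp_rw [← real_inner_smul_right, ← inner_sum, hsum, inner_zero_right]
  have horth : inner ℝ x (x - y a) = 0 :=
    (mul_eq_zero.mp ((Finset.sum_eq_zero_iff_of_nonneg fun j _ => hterm j).mp hsum' a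
      (Finset.mem_univ a))).resolve_left ha.ne'
  have hpyth := norm_sub_sq_real x (x - y a)
  rw [sub_sub_cancel, horth] at hpyth
  have : ‖x - y a‖ = 0 := by nlinarith [hy a, norm_nonneg (x - y a), norm_nonneg (y a)]
  exact (sub_eq_zero.mp (norm_eq_zero.mp this)).symm

variable {A : Matrix ι ι ℝ} {v : ι → E}

theorem eq_of_transGen_of_forall_norm_le (hA : ∀ i j, 0 ≤ A i j)
    (hv : ∀ i, ∑ j, A i j • (v i - v j) = 0) {a b : ι}
    (hab : Relation.TransGen (fun a b => 0 < A b a) a b) (hb : ∀ j, ‖v j‖ ≤ ‖v b‖) :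
    v a = v b := by
  induction hab with
  | single h => exact eq_of_sum_smul_sub_eq_zero_of_norm_le (hA _) hb (hv _) h
  | tail _ h ih =>
    have hcb := eq_of_sum_smul_sub_eq_zero_of_norm_le (hA _) hb (hv _) h
    exact (ih fun j => (hb j).trans_eq (congrArg norm hcb).symm).trans hcb

theorem eq_of_forall_sum_smul_sub_eq_zero (hA : ∀ i j, 0 ≤ A i j)
    (hconn : ∀ i j, i ≠ j → Relation.TransGen (fun a b => 0 < A b a) i j)
    (hv : ∀ i, ∑ j, A i j • (v i - v j) = 0) (i j : ι) : v i = v j := by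
  obtain ⟨b, -, hb⟩ :=
    Finset.exists_max_image Finset.univ (fun k => ‖v k‖) ⟨i, Finset.mem_univ i⟩
  have hvb (k : ι) : v k = v b := by
    rcases eq_or_ne k b with rfl | hk
    · rfl
    · exact eq_of_transGen_of_forall_norm_le hA hv (hconn k b hk) fun j =>
        hb j (Finset.mem_univ j)
  rw [hvb i, hvb j]

end MaximumPrinciple

theorem Complex.norm_lt_one_of_norm_sub_ofReal_le {z : ℂ} {c : ℝ} (hc : 0 < c)
    (hz : ‖z - c‖ ≤ 1 - c) (hz1 : z ≠ 1) : ‖z‖ < 1 := by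
  have hsq (r : ℝ) : ‖z - r‖ ^ 2 = (z.re - r) ^ 2 + z.im ^ 2 := by
    rw [Complex.sq_norm, Complex.normSq_apply]; simp [sq]
  have hc1 : c ≤ 1 := by linarith [norm_nonneg (z - c)]
  have hdisc : (z.re - c) ^ 2 + z.im ^ 2 ≤ (1 - c) ^ 2 := by
    rw [← hsq]; gcongr
  have hz1' : 0 < (z.re - 1) ^ 2 + z.im ^ 2 := by
    simpa using hsq 1 ▸ pow_pos (norm_pos_iff.2 (sub_ne_zero.2 hz1)) 2
  rw [← sq_lt_one_iff₀ (norm_nonneg z), ← Complex.normSq_eq_norm_sq, Complex.normSq_apply]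
  by_contra! h
  have hre : 1 ≤ z.re := by nlinarith
  nlinarith [mul_nonneg (sub_nonneg.2 hre) (sub_nonneg.2 hc1)]

theorem norm_lt_one_of_hasEigenvalue_map_ofReal {ι : Type*} [Fintype ι] [DecidableEq ι]
    {P : Matrix ι ι ℝ} (hoff : ∀ i j, i ≠ j → 0 ≤ P i j) (hdiag : ∀ i, 0 < P i i)
    (hrow : ∀ i, ∑ j, P i j = 1) {μ : ℂ}
    (hμ : Module.End.HasEigenvalue (toLin' (P.map Complex.ofReal)) μ) (hμ1 : μ ≠ 1) :
    ‖μ‖ < 1 := by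
  obtain ⟨k, hk⟩ := eigenvalue_mem_ball hμ
  have hrad : ∑ j ∈ Finset.univ.erase k, ‖(P.map Complex.ofReal) k j‖ = 1 - P k k := by
    rw [← hrow k, ← Finset.sum_erase_add _ _ (Finset.mem_univ k), add_sub_cancel_right]
    refine Finset.sum_congr rfl fun j hj => ?_
    rw [map_apply, Complex.norm_real,
      Real.norm_of_nonneg (hoff k j (Finset.ne_of_mem_erase hj).symm)]
  rw [Metric.mem_closedBall, dist_eq_norm, hrad, map_apply] at hk
  exact Complex.norm_lt_one_of_norm_sub_ofReal_le (hdiag k) hk hμ1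

theorem Matrix.mulVec_eq_smul_of_mulVec_sub_vecMulVec_eq_smul {ι K : Type*} [Fintype ι]
    [Field K] {P : Matrix ι ι K} {ω v : ι → K} {μ : K} (hωP : ω ᵥ* P = ω) (hω : ω ⬝ᵥ 1 = 1)
    (hv : (P - vecMulVec 1 ω) *ᵥ v = μ • v) (hμ : μ ≠ 0) : ω ⬝ᵥ v = 0 ∧ P *ᵥ v = μ • v := by
  have hωv : ω ⬝ᵥ v = 0 := by
    have hωQ : ω ᵥ* (P - vecMulVec 1 ω) = 0 := by
      rw [vecMul_sub, vecMul_vecMulVec, hωP, hω, one_smul, sub_self]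
    have : μ * (ω ⬝ᵥ v) = 0 := by
      rw [← smul_eq_mul, ← dotProduct_smul, ← hv, dotProduct_mulVec, hωQ, zero_dotProduct]
    exact (mul_eq_zero.mp this).resolve_left hμ
  refine ⟨hωv, ?_⟩
  rwa [sub_mulVec, vecMulVec_mulVec, hωv, MulOpposite.op_zero, zero_smul, sub_zero] at hv

section Laplacian

variable {ι : Type*} [DecidableEq ι] {A : Matrix ι ι ℝ} {d : ι → ℝ}

theorem one_sub_smul_laplacian_apply_of_ne (α : ℝ) {i j : ι} (h : i ≠ j) :
    (1 - α • (diagonal d - A)) i j = α * A i j := by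
  simp [one_apply, h]

theorem one_sub_smul_laplacian_apply_self (hA : ∀ i, A i i = 0) (α : ℝ) (i : ι) :
    (1 - α • (diagonal d - A)) i i = 1 - α * d i := by
  simp [hA]

variable [Fintype ι]

theorem laplacian_map_ofReal_mulVec_apply (hd : ∀ i, d i = ∑ j, A i j) (v : ι → ℂ) (i : ι) :
    ((diagonal d - A).map Complex.ofReal *ᵥ v) i = ∑ j, A i j • (v i - v j) := by
  simp [mulVec, dotProduct, diagonal_apply, hd, sub_mul, Finset.sum_sub_distrib, mul_sub,
    Complex.real_smul, apply_ite, ite_mul, Finset.sum_mul]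

theorem sum_one_sub_smul_laplacian_apply (hd : ∀ i, d i = ∑ j, A i j) (α : ℝ) (i : ι) :
    ∑ j, (1 - α • (diagonal d - A)) i j = 1 := by
  simp [Finset.sum_sub_distrib, one_apply, ← Finset.mul_sum, diagonal_apply, hd]

theorem eq_zero_of_one_sub_smul_laplacian_mulVec_eq_self (hA : ∀ i j, 0 ≤ A i j)
    (hconn : ∀ i j, i ≠ j → Relation.TransGen (fun a b => 0 < A b a) i j)
    (hd : ∀ i, d i = ∑ j, A i j) {α : ℝ} (hα : α ≠ 0) {ω v : ι → ℂ} (hω : ω ⬝ᵥ 1 = 1)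
    (hωv : ω ⬝ᵥ v = 0) (hv : (1 - α • (diagonal d - A)).map Complex.ofReal *ᵥ v = v) :
    v = 0 := by
  have hLv : (diagonal d - A).map Complex.ofReal *ᵥ v = 0 := by
    have hPc : (1 - α • (diagonal d - A)).map Complex.ofReal =
        1 - (α : ℂ) • (diagonal d - A).map Complex.ofReal := by
      ext i j; by_cases h : i = j <;> simp [one_apply, h]
    rw [hPc, sub_mulVec, one_mulVec, smul_mulVec, sub_eq_self, smul_eq_zero] at hv
    exact hv.resolve_left (by exact_mod_cast hα)
  have hconst := eq_of_forall_sum_smul_sub_eq_zero (v := v) hA hconn fun i => by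
    rw [← laplacian_map_ofReal_mulVec_apply hd, hLv, Pi.zero_apply]
  funext i
  have hv_eq : v = v i • 1 := funext fun j => by simp [hconst j i]
  rw [hv_eq, dotProduct_smul, hω, smul_eq_mul, mul_one] at hωv
  rw [hv_eq, hωv, zero_smul]

theorem norm_lt_one_of_hasEigenvalue_one_sub_smul_laplacian (hA : ∀ i j, 0 ≤ A i j)
    (hA0 : ∀ i, A i i = 0) (hd : ∀ i, d i = ∑ j, A i j) {α : ℝ} (hα0 : 0 < α)
    (hαd : ∀ i, α * d i < 1) {μ : ℂ}
    (hμ : Module.End.HasEigenvalue (toLin' ((1 - α • (diagonal d - A)).map Complex.ofReal)) μ)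
    (hμ1 : μ ≠ 1) : ‖μ‖ < 1 := by
  refine norm_lt_one_of_hasEigenvalue_map_ofReal (fun i j hij => ?_) (fun i => ?_)
    (sum_one_sub_smul_laplacian_apply hd α) hμ hμ1
  · rw [one_sub_smul_laplacian_apply_of_ne α hij]
    exact mul_nonneg hα0.le (hA i j)
  · rw [one_sub_smul_laplacian_apply_self hA0]
    linarith [hαd i]

end Laplacian

theorem mul_lt_one_of_lt_one_div_sup' {ι : Type*} [Fintype ι] [Nonempty ι] {d : ι → ℝ} {α : ℝ}
    (hα0 : 0 < α) (hα : α < 1 / Finset.univ.sup' Finset.univ_nonempty d) (i : ι) :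
    α * d i < 1 := by
  have hpos := one_div_pos.mp (hα0.trans hα)
  calc α * d i ≤ α * Finset.univ.sup' Finset.univ_nonempty d := by
        gcongr; exact Finset.le_sup' d (Finset.mem_univ i)
    _ < 1 := (lt_div_iff₀ hpos).mp hα

/-- If G is a strongly connected weighted digraph with weight matrix A (no
    self-loops), Laplacian L = D - A with dᵢ = Σⱼ aᵢⱼ, ω the left eigenvector
    of L for eigenvalue 0 with 1ᵀω = 1, and 0 < α < 1/maxᵢ dᵢ, then
    Q = I - αL - 1ωᵀ has spectral radius < 1 (every complex spectral value of Q
    has modulus < 1). -/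
theorem spectral_radius_lt_one_of_alpha_small (n : ℕ) [NeZero n]
    (A : Matrix (Fin n) (Fin n) ℝ)
    (hA_nonneg : ∀ i j, 0 ≤ A i j)
    (hA_noloop : ∀ i, A i i = 0)
    (hconn : ∀ i j : Fin n, i ≠ j → Relation.TransGen (fun a b => 0 < A b a) i j)
    (d : Fin n → ℝ) (hd : ∀ i, d i = ∑ j, A i j)
    (L : Matrix (Fin n) (Fin n) ℝ) (hL : L = diagonal d - A)
    (ω : Fin n → ℝ)
    (hleft : ω ᵥ* L = 0)
    (hnorm : ∑ i, ω i = 1)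
    (α : ℝ) (hα0 : 0 < α) (hα : α < 1 / (Finset.univ.sup' Finset.univ_nonempty d))
    (Q : Matrix (Fin n) (Fin n) ℝ)
    (hQ : Q = 1 - α • L - vecMulVec (fun _ => 1) ω) :
    ∀ μ ∈ spectrum ℂ (Q.map Complex.ofReal), ‖μ‖ < 1 := by
  intro μ hμ
  rcases eq_or_ne μ 0 with rfl | hμ0
  · simp
  subst hL
  set P := 1 - α • (diagonal d - A)
  have hμQ : Module.End.HasEigenvalue (toLin' (Q.map Complex.ofReal)) μ :=
    Module.End.hasEigenvalue_iff_mem_spectrum.mpr (by rwa [spectrum_toLin'])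
  obtain ⟨v, hv, hv0⟩ := hμQ.exists_hasEigenvector
  have hQv : (P.map Complex.ofReal - vecMulVec 1 (Complex.ofReal ∘ ω)) *ᵥ v = μ • v := by
    rw [← Module.End.mem_eigenspace_iff.mp hv, toLin'_apply, hQ]
    congr 1; ext i j; simp [P, vecMulVec_apply]
  have hωP : (Complex.ofReal ∘ ω) ᵥ* P.map Complex.ofReal = Complex.ofReal ∘ ω := by
    have hωP_real : ω ᵥ* P = ω := by
      rw [vecMul_sub, vecMul_one, vecMul_smul, hleft, smul_zero, sub_zero]
    funext j
    exact (RingHom.map_vecMul Complex.ofRealHom P ω j).symm.trans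
      (congrArg Complex.ofReal (congrFun hωP_real j))
  have hω1 : (Complex.ofReal ∘ ω) ⬝ᵥ 1 = 1 := by
    simp [dotProduct, ← Complex.ofReal_sum, hnorm]
  obtain ⟨hωv, hPv⟩ := mulVec_eq_smul_of_mulVec_sub_vecMulVec_eq_smul hωP hω1 hQv hμ0
  have hμ1 : μ ≠ 1 := by
    rintro rfl
    rw [one_smul] at hPv
    exact hv0 (eq_zero_of_one_sub_smul_laplacian_mulVec_eq_self hA_nonneg hconn hd hα0.ne'
      hω1 hωv hPv)
  exact norm_lt_one_of_hasEigenvalue_one_sub_smul_laplacian hA_nonneg hA_noloop hd hα0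
    (mul_lt_one_of_lt_one_div_sup' hα0 hα) (Module.End.hasEigenvalue_of_hasEigenvector
      ⟨by rw [Module.End.mem_eigenspace_iff, toLin'_apply, hPv], hv0⟩) hμ1
end

section
/- For 0 < ρ < 1 and integer q > 1, the partial sums satisfy, for all t ≥ 1: Σ_{k=1}^{t} k^(q-1) ρᵏ ≤ ((1-q)/(e·log ρ))^(q-1) + Σ_{j=0}^{q-1} (q-1)!·ρ / (j!·(-log ρ)^(q-j)). -/
/-!
With `b = -log ρ` and `n = q - 1`, the summand is `f k` for `f s = s ^ n * exp (-b * s)`, which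
increases up to `T = n / b` and decreases afterwards. Each unit interval `[k, k + 1]` carries at
least `min (f k) (f (k + 1))` of the integral of `f`, so the partial sum exceeds `∫₁ᵗ f` by at most
one value of `f`, hence by at most `f T = (n / (e b)) ^ n`. The integral is bounded by `∫₁^∞ f`,
computed from the explicit primitive `-exp (-b * s) * ∑ j ≤ n, n! / (j! b ^ (n + 1 - j)) * s ^ j`.
-/

open Real Set
open scoped Nat

section Unimodal

variable {f : ℝ → ℝ} {T : ℝ}

theorem apply_le_peak_of_unimodal (hmono : MonotoneOn f (Icc 1 T)) (hanti : AntitoneOn f (Ici T))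
    {s : ℝ} (hs : 1 ≤ s) : f s ≤ f T := by
  rcases le_total s T with h | h
  · exact hmono ⟨hs, h⟩ ⟨hs.trans h, le_rfl⟩ h
  · exact hanti self_mem_Ici h h

theorem min_le_apply_of_unimodal (hmono : MonotoneOn f (Icc 1 T)) (hanti : AntitoneOn f (Ici T))
    {u s v : ℝ} (hu : 1 ≤ u) (hus : u ≤ s) (hsv : s ≤ v) : min (f u) (f v) ≤ f s := by
  rcases le_total s T with h | h
  · exact (min_le_left _ _).trans (hmono ⟨hu, hus.trans h⟩ ⟨hu.trans hus, h⟩ hus)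
  · exact (min_le_right _ _).trans (hanti h (h.trans hsv) hsv)

theorem min_le_integral_of_unimodal (hmono : MonotoneOn f (Icc 1 T))
    (hanti : AntitoneOn f (Ici T)) (hf : ContinuousOn f (Ici 1)) {u : ℝ} (hu : 1 ≤ u) :
    min (f u) (f (u + 1)) ≤ ∫ s in u..u + 1, f s := by
  have hint : IntervalIntegrable f MeasureTheory.volume u (u + 1) :=
    (hf.mono fun s hs ↦ hu.trans (by simpa [Set.uIcc_of_le] using hs.1)).intervalIntegrable
  simpa using intervalIntegral.integral_mono_on (by linarith) intervalIntegrable_const hint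
    fun s hs ↦ min_le_apply_of_unimodal hmono hanti hu hs.1 hs.2

theorem apply_min_add_le_of_unimodal (hmono : MonotoneOn f (Icc 1 T))
    (hanti : AntitoneOn f (Ici T)) {u : ℝ} (hu : 1 ≤ u) :
    f (min u T) + f (u + 1) ≤ f (min (u + 1) T) + min (f u) (f (u + 1)) := by
  rcases le_total (u + 1) T with h | h
  · have hle : f u ≤ f (u + 1) := hmono ⟨hu, by linarith⟩ ⟨by linarith, h⟩ (by linarith)
    rw [min_eq_left (by linarith), min_eq_left h, min_eq_left hle, add_comm]
  rcases le_total T u with h' | h'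
  · have hle : f (u + 1) ≤ f u := hanti h' (by simp only [Set.mem_Ici]; linarith) (by linarith)
    rw [min_eq_right h', min_eq_right h, min_eq_right hle]
  · rw [min_eq_left h', min_eq_right h, ← max_add_min (f u)]
    gcongr
    exact max_le (apply_le_peak_of_unimodal hmono hanti hu)
      (apply_le_peak_of_unimodal hmono hanti (by linarith))

theorem sum_Icc_le_peak_add_integral_of_unimodal (hmono : MonotoneOn f (Icc 1 T))
    (hanti : AntitoneOn f (Ici T)) (hf : ContinuousOn f (Ici 1)) {t : ℕ} (ht : 1 ≤ t) :
    ∑ k ∈ Finset.Icc 1 t, f k ≤ f T + ∫ s in (1 : ℝ)..t, f s := by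
  have hint {u v : ℝ} (hu : 1 ≤ u) (hv : 1 ≤ v) : IntervalIntegrable f MeasureTheory.volume u v :=
    (hf.mono fun s hs ↦ (le_min hu hv).trans hs.1).intervalIntegrable
  suffices h : ∑ k ∈ Finset.Icc 1 t, f k ≤ f (min t T) + ∫ s in (1 : ℝ)..t, f s by
    rcases le_total T t with hT | hT
    · rwa [min_eq_right hT] at h
    · rw [min_eq_left hT] at h
      exact h.trans (by gcongr; exact apply_le_peak_of_unimodal hmono hanti (by exact_mod_cast ht))
  induction t, ht using Nat.le_induction with
  | base =>
    rcases le_total 1 T with hT | hT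
    · simp [min_eq_left hT]
    · simpa [min_eq_right hT] using hanti self_mem_Ici (by simpa using hT) hT
  | succ t ht ih =>
    have hu : (1 : ℝ) ≤ t := by exact_mod_cast ht
    rw [Finset.sum_Icc_succ_top (by omega), Nat.cast_succ,
      ← intervalIntegral.integral_add_adjacent_intervals (hint le_rfl hu) (hint hu (by linarith))]
    linarith [apply_min_add_le_of_unimodal hmono hanti hu,
      min_le_integral_of_unimodal hmono hanti hf hu]

end Unimodal

section PowMulExp

variable {b : ℝ}

theorem hasDerivAt_pow_mul_exp_neg_mul (b : ℝ) {n : ℕ} (hn : n ≠ 0) (s : ℝ) :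
    HasDerivAt (fun s ↦ s ^ n * exp (-b * s)) (s ^ (n - 1) * (n - b * s) * exp (-b * s)) s := by
  refine ((hasDerivAt_pow n s).fun_mul ((hasDerivAt_id s).const_mul (-b)).exp).congr_deriv ?_
  obtain ⟨m, rfl⟩ := Nat.exists_eq_succ_of_ne_zero hn
  simp only [Nat.succ_sub_one, pow_succ, id]
  push_cast
  ring

theorem monotoneOn_pow_mul_exp_neg_mul (hb : 0 < b) {n : ℕ} (hn : n ≠ 0) :
    MonotoneOn (fun s ↦ s ^ n * exp (-b * s)) (Icc 0 (n / b)) := by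
  refine monotoneOn_of_hasDerivWithinAt_nonneg (convex_Icc _ _) (by fun_prop)
    (fun s _ ↦ (hasDerivAt_pow_mul_exp_neg_mul b hn s).hasDerivWithinAt) fun s hs ↦ ?_
  rw [interior_Icc] at hs
  have hbs : b * s ≤ n := by rw [← le_div_iff₀' hb]; exact hs.2.le
  have : 0 ≤ s ^ (n - 1) := pow_nonneg hs.1.le _
  exact mul_nonneg (mul_nonneg this (by linarith)) (exp_pos _).le

theorem antitoneOn_pow_mul_exp_neg_mul (hb : 0 < b) {n : ℕ} (hn : n ≠ 0) :
    AntitoneOn (fun s ↦ s ^ n * exp (-b * s)) (Ici (n / b)) := by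
  refine antitoneOn_of_hasDerivWithinAt_nonpos (convex_Ici _) (by fun_prop)
    (fun s _ ↦ (hasDerivAt_pow_mul_exp_neg_mul b hn s).hasDerivWithinAt) fun s hs ↦ ?_
  rw [interior_Ici] at hs
  have hbs : n < b * s := by rw [← div_lt_iff₀' hb]; exact hs
  have : 0 ≤ s ^ (n - 1) := pow_nonneg ((div_nonneg n.cast_nonneg hb.le).trans hs.le) _
  exact mul_nonpos_of_nonpos_of_nonneg (mul_nonpos_of_nonneg_of_nonpos this (by linarith))
    (exp_pos _).le

theorem pow_mul_exp_neg_mul_div_self (hb : b ≠ 0) (n : ℕ) :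
    (n / b) ^ n * exp (-b * (n / b)) = (n / (exp 1 * b)) ^ n := by
  rw [show -b * (n / b) = n * (-1) by field_simp, exp_nat_mul, exp_neg, ← mul_pow]
  field_simp

noncomputable def powExpPrimCoeff (b : ℝ) (n j : ℕ) : ℝ := n ! / (j ! * b ^ (n + 1 - j))

theorem succ_mul_powExpPrimCoeff_succ (hb : b ≠ 0) {n j : ℕ} (hj : j < n) :
    (j + 1 : ℕ) * powExpPrimCoeff b n (j + 1) = b * powExpPrimCoeff b n j := by
  rw [powExpPrimCoeff, powExpPrimCoeff, show n + 1 - j = n + 1 - (j + 1) + 1 by omega,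
    Nat.factorial_succ, pow_succ]
  push_cast
  field_simp

theorem mul_powExpPrimCoeff_self (hb : b ≠ 0) (n : ℕ) : b * powExpPrimCoeff b n n = 1 := by
  rw [powExpPrimCoeff, Nat.add_sub_cancel_left, pow_one]
  field_simp

theorem mul_sum_powExpPrimCoeff_sub_deriv (hb : b ≠ 0) (n : ℕ) (s : ℝ) :
    b * ∑ j ∈ Finset.range (n + 1), powExpPrimCoeff b n j * s ^ j
      - ∑ j ∈ Finset.range (n + 1), powExpPrimCoeff b n j * (j * s ^ (j - 1)) = s ^ n := by
  have hshift : ∑ j ∈ Finset.range n,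
        powExpPrimCoeff b n (j + 1) * ((j + 1 : ℕ) * s ^ (j + 1 - 1))
      = ∑ j ∈ Finset.range n, b * (powExpPrimCoeff b n j * s ^ j) := by
    refine Finset.sum_congr rfl fun j hj ↦ ?_
    rw [Nat.add_sub_cancel]
    linear_combination s ^ j * succ_mul_powExpPrimCoeff_succ hb (Finset.mem_range.mp hj)
  rw [Finset.sum_range_succ' (fun j ↦ powExpPrimCoeff b n j * ((j : ℝ) * s ^ (j - 1))),
    Finset.sum_range_succ, mul_add, Finset.mul_sum, hshift]
  simp only [Nat.cast_zero, zero_mul, mul_zero, add_zero]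
  linear_combination s ^ n * mul_powExpPrimCoeff_self hb n

theorem hasDerivAt_neg_exp_mul_sum_powExpPrimCoeff (hb : b ≠ 0) (n : ℕ) (s : ℝ) :
    HasDerivAt
      (fun s ↦ -(exp (-b * s) * ∑ j ∈ Finset.range (n + 1), powExpPrimCoeff b n j * s ^ j))
      (s ^ n * exp (-b * s)) s := by
  have hpoly := HasDerivAt.fun_sum (u := Finset.range (n + 1)) fun j _ ↦
    (hasDerivAt_pow j s).const_mul (powExpPrimCoeff b n j)
  refine ((((hasDerivAt_id s).const_mul (-b)).exp.fun_mul hpoly).fun_neg).congr_deriv ?_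
  simp only [id]
  linear_combination exp (-b * s) * mul_sum_powExpPrimCoeff_sub_deriv hb n s

theorem integral_pow_mul_exp_neg_mul_le (hb : 0 < b) (n : ℕ) {t : ℝ} (ht : 0 ≤ t) :
    ∫ s in (1 : ℝ)..t, s ^ n * exp (-b * s)
      ≤ exp (-b) * ∑ j ∈ Finset.range (n + 1), powExpPrimCoeff b n j := by
  rw [intervalIntegral.integral_eq_sub_of_hasDerivAt
    (fun s _ ↦ hasDerivAt_neg_exp_mul_sum_powExpPrimCoeff hb.ne' n s)
    ((by fun_prop : Continuous fun s : ℝ ↦ s ^ n * exp (-b * s)).intervalIntegrable _ _)]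
  simp only [mul_one, one_pow, sub_neg_eq_add, neg_add_le_iff_le_add, le_add_iff_nonneg_left]
  unfold powExpPrimCoeff
  positivity

end PowMulExp

/-- For 0 < ρ < 1 and integer q > 1, for all t ≥ 1:
    Σ_{k=1}^{t} k^(q-1) ρᵏ ≤ ((1-q)/(e·log ρ))^(q-1)
      + Σ_{j=0}^{q-1} (q-1)!·ρ/(j!·(-log ρ)^(q-j)). -/
theorem poly_geom_partial_sum_bound (ρ : ℝ) (hρ0 : 0 < ρ) (hρ1 : ρ < 1)
    (q : ℕ) (hq : 1 < q) :
    ∀ t : ℕ, 1 ≤ t →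
      ∑ k ∈ Finset.Icc 1 t, (k : ℝ) ^ (q - 1) * ρ ^ k ≤
        ((1 - (q : ℝ)) / (Real.exp 1 * Real.log ρ)) ^ (q - 1) +
          ∑ j ∈ Finset.range q,
            ((q - 1).factorial : ℝ) * ρ /
              ((j.factorial : ℝ) * (-Real.log ρ) ^ (q - j)) := by
  intro t ht
  obtain ⟨n, rfl⟩ : ∃ n, q = n + 1 := ⟨q - 1, by omega⟩
  have hn : n ≠ 0 := by omega
  set b := -log ρ with hb_def
  have hb : 0 < b := neg_pos.mpr (log_neg hρ0 hρ1)
  have hρ : exp (-b) = ρ := by rw [hb_def, neg_neg, exp_log hρ0]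
  have hρ_pow (k : ℕ) : ρ ^ k = exp (-b * k) := by rw [← hρ, ← exp_nat_mul]; ring_nf
  have hpeak : (1 - ((n + 1 : ℕ) : ℝ)) / (exp 1 * log ρ) = n / (exp 1 * b) := by
    push_cast; rw [hb_def]; field_simp; ring
  have hsum := sum_Icc_le_peak_add_integral_of_unimodal
    ((monotoneOn_pow_mul_exp_neg_mul hb hn).mono (Icc_subset_Icc_left zero_le_one))
    (antitoneOn_pow_mul_exp_neg_mul hb hn) (by fun_prop) ht
  simp only [Nat.add_sub_cancel, hρ_pow, hpeak]
  calc _ ≤ _ := hsum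
    _ ≤ _ := add_le_add (pow_mul_exp_neg_mul_div_self hb.ne' n).le
      (integral_pow_mul_exp_neg_mul_le hb n (Nat.cast_nonneg t))
    _ = _ := by
      rw [← hρ, Finset.mul_sum]
      congr 1
      exact Finset.sum_congr rfl fun j _ ↦ by unfold powExpPrimCoeff; ring
end
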